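/- For every even integer t ≥ 4 and v = 12t+7, the collection consisting of F_{1,i} = {0, 3t+i+1, 2i} for 2 ≤ i ≤ t−2 with i ≠ t/2, F_{2,i} = {0, 5t+i+3, 2i+1} for 1 ≤ i ≤ t−2, together with the seven blocks {0,1,2t−1}, {0,2,4t+2}, {0,2t,4t+1}, {0,2t+2,5t+2}, {0,5t/2+1,6t+2}, {0,t,5t+3}, {0,3t+1,6t+3}, forms a (12t+7,3,1)-perfect difference family: the positive differences cover each element of {1,...,6t+3} exactly once. -/

import Mathlib

/-!
Every block has the shape `{0, a, b}` with `0 < b < a ≤ 6t+3` and so contributes the three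
differences `a`, `b`, `a - b`, all in `[1, 6t+3]`. There are `2t+1` blocks, hence exactly `6t+3`
differences, so it suffices that every `d ∈ [1, 6t+3]` occurs at least once. That is a case split
on `d`: the seven sporadic blocks supply 21 values; the rest are the `2i` and `2i+1` below `2t-2`,
the values `3t+1-i` and `3t+i+1` of `F_{1,i}` in `[2t+3, 3t-1]` and `[3t+3, 4t-1]`, and the values
`5t+2-i` and `5t+i+3` of `F_{2,i}` in `[4t+4, 5t+1]` and `[5t+4, 6t+1]`.
-/

/-- The multiset of positive differences of a finite set of naturals. -/
def posDiffs (B : Finset ℕ) : Multiset ℕ :=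
  ((B ×ˢ B).filter (fun p => p.2 < p.1)).val.map (fun p => p.1 - p.2)

/-- `F` is a `(v,k,λ)`-perfect difference family. -/
def IsPDF (v k lam : ℕ) (F : Multiset (Finset ℕ)) : Prop :=
  Odd v ∧ (∀ B ∈ F, B.card = k ∧ B ⊆ Finset.range v) ∧
  ∀ d ∈ Finset.Icc 1 ((v - 1) / 2), (F.bind posDiffs).count d = lam

open Finset

theorem Multiset.count_eq_one_of_toFinset_eq {α : Type*} [DecidableEq α] {M : Multiset α}
    {s : Finset α} (hs : M.toFinset = s) (hcard : Multiset.card M = s.card) {x : α}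
    (hx : x ∈ s) : M.count x = 1 :=
  Multiset.count_eq_one_of_mem (Multiset.toFinset_card_eq_card_iff_nodup.1 (hs ▸ hcard.symm))
    (by rwa [← Multiset.mem_toFinset, hs])

theorem posDiffs_triple {a b : ℕ} (hb : 0 < b) (hba : b < a) :
    posDiffs {0, a, b} = {a, b, a - b} := by
  have hpairs : (({0, a, b} : Finset ℕ) ×ˢ {0, a, b}).filter (fun p => p.2 < p.1)
      = {(a, 0), (a, b), (b, 0)} := by
    ext ⟨x, y⟩
    simp only [mem_filter, mem_product, mem_insert, mem_singleton, Prod.ext_iff]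
    omega
  rw [posDiffs, hpairs, insert_val_of_notMem (by simp; omega),
    insert_val_of_notMem (by simp; omega)]
  simp only [Multiset.map_cons, singleton_val, Multiset.map_singleton, Nat.sub_zero]
  exact congrArg (a ::ₘ ·) (Multiset.cons_swap _ _ _)

theorem mem_bind_posDiffs_of_triple_mem {F : Multiset (Finset ℕ)} {a b d : ℕ}
    (hF : {0, a, b} ∈ F) (hb : 0 < b) (hba : b < a) (hd : d = a ∨ d = b ∨ d = a - b) :
    d ∈ F.bind posDiffs :=
  Multiset.mem_bind.2 ⟨_, hF, by simpa [posDiffs_triple hb hba] using hd⟩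

def IsBaseTriple (n : ℕ) (B : Finset ℕ) : Prop :=
  ∃ a b, 0 < b ∧ b < a ∧ a ≤ n ∧ B = {0, a, b}

namespace IsBaseTriple

variable {n : ℕ} {B : Finset ℕ}

theorem card_eq_three (h : IsBaseTriple n B) : B.card = 3 := by
  obtain ⟨a, b, hb, hba, -, rfl⟩ := h
  exact card_eq_three.2 ⟨0, a, b, by omega, by omega, by omega, rfl⟩

theorem subset_range (h : IsBaseTriple n B) : B ⊆ range (n + 1) := by
  obtain ⟨a, b, -, hba, han, rfl⟩ := h
  intro x hx
  simp only [mem_insert, mem_singleton] at hx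
  simp only [mem_range]
  omega

theorem card_posDiffs (h : IsBaseTriple n B) : Multiset.card (posDiffs B) = 3 := by
  obtain ⟨a, b, hb, hba, -, rfl⟩ := h
  simp [posDiffs_triple hb hba]

theorem mem_Icc_of_mem_posDiffs (h : IsBaseTriple n B) {d : ℕ} (hd : d ∈ posDiffs B) :
    d ∈ Icc 1 n := by
  obtain ⟨a, b, hb, hba, han, rfl⟩ := h
  simp only [posDiffs_triple hb hba, Multiset.insert_eq_cons, Multiset.mem_cons,
    Multiset.mem_singleton] at hd
  simp only [mem_Icc]
  omega

end IsBaseTriple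

theorem isPDF_of_covers {n : ℕ} {F : Multiset (Finset ℕ)} (hF : ∀ B ∈ F, IsBaseTriple n B)
    (hcard : 3 * Multiset.card F = n) (hcov : ∀ d ∈ Icc 1 n, d ∈ F.bind posDiffs) :
    IsPDF (2 * n + 1) 3 1 F := by
  refine ⟨odd_two_mul_add_one n, fun B hB => ⟨(hF B hB).card_eq_three,
    (hF B hB).subset_range.trans (range_subset_range.2 (by omega))⟩, ?_⟩
  have hdiffs : (F.bind posDiffs).toFinset = Icc 1 n := by
    ext d
    refine ⟨fun hd => ?_, fun hd => Multiset.mem_toFinset.2 (hcov d hd)⟩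
    obtain ⟨B, hB, hdB⟩ := Multiset.mem_bind.1 (Multiset.mem_toFinset.1 hd)
    exact (hF B hB).mem_Icc_of_mem_posDiffs hdB
  have hcard_diffs : Multiset.card (F.bind posDiffs) = (Icc 1 n).card := by
    rw [Multiset.card_bind,
      Multiset.map_congr (f := Multiset.card ∘ posDiffs) rfl fun B hB => (hF B hB).card_posDiffs,
      Multiset.map_const', Multiset.sum_replicate, smul_eq_mul, Nat.card_Icc]
    omega
  rw [show (2 * n + 1 - 1) / 2 = n by omega]
  exact fun d hd => Multiset.count_eq_one_of_toFinset_eq hdiffs hcard_diffs hd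

def blocks₁ (t : ℕ) : Multiset (Finset ℕ) :=
  ((Icc 2 (t - 2)).erase (t / 2)).val.map fun i => ({0, 3 * t + i + 1, 2 * i} : Finset ℕ)

def blocks₂ (t : ℕ) : Multiset (Finset ℕ) :=
  (Icc 1 (t - 2)).val.map fun i => ({0, 5 * t + i + 3, 2 * i + 1} : Finset ℕ)

def sporadicBlocks (t : ℕ) : Multiset (Finset ℕ) :=
  {{0, 1, 2 * t - 1}, {0, 2, 4 * t + 2}, {0, 2 * t, 4 * t + 1}, {0, 2 * t + 2, 5 * t + 2},
    {0, 5 * t / 2 + 1, 6 * t + 2}, {0, t, 5 * t + 3}, {0, 3 * t + 1, 6 * t + 3}}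

def pdfBlocks (t : ℕ) : Multiset (Finset ℕ) := blocks₁ t + blocks₂ t + sporadicBlocks t

theorem card_pdfBlocks {t : ℕ} (ht : 4 ≤ t) : Multiset.card (pdfBlocks t) = 2 * t + 1 := by
  have hmid : t / 2 ∈ Icc 2 (t - 2) := mem_Icc.2 ⟨by omega, by omega⟩
  simp only [pdfBlocks, blocks₁, blocks₂, sporadicBlocks, Multiset.card_add, Multiset.card_map,
    card_val, card_erase_of_mem hmid, Nat.card_Icc, Multiset.insert_eq_cons,
    Multiset.card_cons, Multiset.card_singleton]
  omega

theorem isBaseTriple_of_mem_pdfBlocks {t : ℕ} (ht : 2 ≤ t) {B : Finset ℕ}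
    (hB : B ∈ pdfBlocks t) : IsBaseTriple (6 * t + 3) B := by
  simp only [pdfBlocks, blocks₁, blocks₂, sporadicBlocks, Multiset.mem_add, Multiset.mem_map,
    mem_val, mem_erase, mem_Icc, Multiset.insert_eq_cons, Multiset.mem_cons,
    Multiset.mem_singleton] at hB
  rcases hB with (⟨i, ⟨-, hi⟩, rfl⟩ | ⟨i, hi, rfl⟩) | hB
  · exact ⟨3 * t + i + 1, 2 * i, by omega, by omega, by omega, rfl⟩
  · exact ⟨5 * t + i + 3, 2 * i + 1, by omega, by omega, by omega, rfl⟩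
  · have base {a b : ℕ} (hb : 0 < b) (hba : b < a) (ha : a ≤ 6 * t + 3) :
        IsBaseTriple (6 * t + 3) {0, b, a} := ⟨a, b, hb, hba, ha, by rw [pair_comm]⟩
    rcases hB with rfl | rfl | rfl | rfl | rfl | rfl | rfl <;>
      exact base (by omega) (by omega) (by omega)

theorem mem_bind_posDiffs_pdfBlocks {t d : ℕ} (ht : Even t) (ht4 : 4 ≤ t)
    (hd : d ∈ Icc 1 (6 * t + 3)) :
    d ∈ (pdfBlocks t).bind posDiffs := by
  have h₁ (i : ℕ) (hi : 2 ≤ i ∧ i ≤ t - 2 ∧ i ≠ t / 2)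
      (hdi : d = 3 * t + i + 1 ∨ d = 2 * i ∨ d = 3 * t + i + 1 - 2 * i) :
      d ∈ (pdfBlocks t).bind posDiffs := by
    refine mem_bind_posDiffs_of_triple_mem ?_ (by omega) (by omega) hdi
    refine Multiset.mem_add.2 (.inl (Multiset.mem_add.2 (.inl (Multiset.mem_map_of_mem _ ?_))))
    simp only [mem_val, mem_erase, mem_Icc]
    omega
  have h₂ (i : ℕ) (hi : 1 ≤ i ∧ i ≤ t - 2)
      (hdi : d = 5 * t + i + 3 ∨ d = 2 * i + 1 ∨ d = 5 * t + i + 3 - (2 * i + 1)) :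
      d ∈ (pdfBlocks t).bind posDiffs := by
    refine mem_bind_posDiffs_of_triple_mem ?_ (by omega) (by omega) hdi
    refine Multiset.mem_add.2 (.inl (Multiset.mem_add.2 (.inr (Multiset.mem_map_of_mem _ ?_))))
    simp only [mem_val, mem_Icc]
    omega
  have hs (a b : ℕ) (hB : {0, b, a} ∈ sporadicBlocks t) (hb : 0 < b) (hba : b < a)
      (hdi : d = a ∨ d = b ∨ d = a - b) : d ∈ (pdfBlocks t).bind posDiffs :=
    mem_bind_posDiffs_of_triple_mem (Multiset.mem_add.2 (.inr (pair_comm b a ▸ hB))) hb hba hdi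
  have ht2 : t % 2 = 0 := Nat.even_iff.1 ht
  simp only [mem_Icc] at hd
  rcases (by omega :
      (d = 1 ∨ d = 2 * t - 1 ∨ d = 2 * t - 2) ∨
      (d = 2 ∨ d = 4 * t + 2 ∨ d = 4 * t) ∨
      (d = 2 * t ∨ d = 4 * t + 1 ∨ d = 2 * t + 1) ∨
      (d = 2 * t + 2 ∨ d = 5 * t + 2 ∨ d = 3 * t) ∨
      (d = 5 * t / 2 + 1 ∨ d = 6 * t + 2 ∨ d = 6 * t + 2 - (5 * t / 2 + 1)) ∨
      (d = t ∨ d = 5 * t + 3 ∨ d = 4 * t + 3) ∨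
      (d = 3 * t + 1 ∨ d = 6 * t + 3 ∨ d = 3 * t + 2) ∨
      (3 ≤ d ∧ d ≤ 2 * t - 3 ∧ d % 2 = 1) ∨
      (4 ≤ d ∧ d ≤ 2 * t - 4 ∧ d % 2 = 0 ∧ d ≠ t) ∨
      (2 * t + 3 ≤ d ∧ d ≤ 3 * t - 1 ∧ d ≠ 5 * t / 2 + 1) ∨
      (3 * t + 3 ≤ d ∧ d ≤ 4 * t - 1 ∧ d ≠ 7 * t / 2 + 1) ∨
      (4 * t + 4 ≤ d ∧ d ≤ 5 * t + 1) ∨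
      (5 * t + 4 ≤ d ∧ d ≤ 6 * t + 1))
    with h | h | h | h | h | h | h | h | h | h | h | h | h
  · exact hs (2 * t - 1) 1 (by simp [sporadicBlocks]) (by omega) (by omega) (by omega)
  · exact hs (4 * t + 2) 2 (by simp [sporadicBlocks]) (by omega) (by omega) (by omega)
  · exact hs (4 * t + 1) (2 * t) (by simp [sporadicBlocks]) (by omega) (by omega) (by omega)
  · exact hs (5 * t + 2) (2 * t + 2) (by simp [sporadicBlocks]) (by omega) (by omega) (by omega)
  · exact hs (6 * t + 2) (5 * t / 2 + 1) (by simp [sporadicBlocks]) (by omega) (by omega)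
      (by omega)
  · exact hs (5 * t + 3) t (by simp [sporadicBlocks]) (by omega) (by omega) (by omega)
  · exact hs (6 * t + 3) (3 * t + 1) (by simp [sporadicBlocks]) (by omega) (by omega) (by omega)
  · exact h₂ (d / 2) (by omega) (by omega)
  · exact h₁ (d / 2) (by omega) (by omega)
  · exact h₁ (3 * t + 1 - d) (by omega) (by omega)
  · exact h₁ (d - (3 * t + 1)) (by omega) (by omega)
  · exact h₂ (5 * t + 2 - d) (by omega) (by omega)
  · exact h₂ (d - (5 * t + 3)) (by omega) (by omega)

/-- For every even `t ≥ 4`, the blocks `{0, 3t+i+1, 2i}` (`2 ≤ i ≤ t−2`, `i ≠ t/2`),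
`{0, 5t+i+3, 2i+1}` (`1 ≤ i ≤ t−2`), together with the seven sporadic blocks,
form a `(12t+7,3,1)`-perfect difference family. -/
theorem stmt8 (t : ℕ) (ht : Even t) (ht4 : 4 ≤ t) :
    IsPDF (12 * t + 7) 3 1
      ((((Finset.Icc 2 (t - 2)).erase (t / 2)).val.map
          (fun i => ({0, 3 * t + i + 1, 2 * i} : Finset ℕ))) +
       ((Finset.Icc 1 (t - 2)).val.map
          (fun i => ({0, 5 * t + i + 3, 2 * i + 1} : Finset ℕ))) +
       ({({0, 1, 2 * t - 1} : Finset ℕ), {0, 2, 4 * t + 2}, {0, 2 * t, 4 * t + 1},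
         {0, 2 * t + 2, 5 * t + 2}, {0, 5 * t / 2 + 1, 6 * t + 2},
         {0, t, 5 * t + 3}, {0, 3 * t + 1, 6 * t + 3}} : Multiset (Finset ℕ))) := by
  rw [show 12 * t + 7 = 2 * (6 * t + 3) + 1 by ring]
  exact isPDF_of_covers (F := pdfBlocks t)
    (fun _ hB => isBaseTriple_of_mem_pdfBlocks (by omega) hB)
    (by rw [card_pdfBlocks ht4]; ring)
    (fun _ hd => mem_bind_posDiffs_pdfBlocks ht ht4 hd)
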